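/- Fix λ > 0, κ > 0, a column vector x ∈ ℝ^T with x ≠ 0, and b ∈ ℝ^{1×d} with b = κ x^⊤ M for some fixed M ∈ ℝ^{T×d}. Consider f(β) = λ‖β‖₂ + (κ/2)‖M − xβ‖_F² over β ∈ ℝ^{1×d}. Then the unique minimizer of f is β* = (1/(κ x^⊤x)) (1 − λ/‖b‖₂)₊ b, where (·)₊ = max(·,0); in particular β* = 0 if and only if ‖b‖₂ ≤ λ. -/

import Mathlib

/-!
Expanding the square, the objective is, up to a constant, `g β = λ‖β‖ - ⟪b, β⟫ + (c/2)‖β‖²` with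
`c = κ xᵀx > 0`. For `s = β*` the vector `v = b - c s` satisfies `‖v‖ ≤ λ` and `⟪v, s⟫ = λ‖s‖`, i.e.
`v` is a subgradient of `λ‖·‖` at `s`; this is exactly the optimality condition of the strongly
convex `g`, and it yields the quadratic growth `g s + (c/2)‖β - s‖² ≤ g β`, which gives both
minimality and uniqueness.
-/

open RealInnerProductSpace

section InnerProductSpace

variable {E : Type*} [NormedAddCommGroup E] [InnerProductSpace ℝ E]

noncomputable def groupLassoObjective (lam c : ℝ) (b β : E) : ℝ :=
  lam * ‖β‖ - ⟪b, β⟫ + c / 2 * ‖β‖ ^ 2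

noncomputable def blockSoftThreshold (lam c : ℝ) (b : E) : E :=
  ((1 / c) * max (1 - lam / ‖b‖) 0) • b

theorem inner_sub_le_of_subgradient_norm {lam : ℝ} {v s : E} (hv : ‖v‖ ≤ lam)
    (hvs : ⟪v, s⟫ = lam * ‖s‖) (β : E) : ⟪v, β - s⟫ ≤ lam * (‖β‖ - ‖s‖) := by
  have hCS : ⟪v, β⟫ ≤ lam * ‖β‖ :=
    (real_inner_le_norm v β).trans (mul_le_mul_of_nonneg_right hv (norm_nonneg β))
  rw [inner_sub_right]
  linarith

theorem groupLassoObjective_sub_sub_eq (lam c : ℝ) (b s β : E) :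
    groupLassoObjective lam c b β - groupLassoObjective lam c b s - c / 2 * ‖β - s‖ ^ 2
      = lam * (‖β‖ - ‖s‖) - ⟪b - c • s, β - s⟫ := by
  have hexp : ‖β‖ ^ 2 = ‖s‖ ^ 2 + 2 * ⟪s, β - s⟫ + ‖β - s‖ ^ 2 := by
    simpa using norm_add_sq_real s (β - s)
  simp only [groupLassoObjective, hexp, inner_sub_left, inner_sub_right, real_inner_smul_left]
  ring

theorem groupLassoObjective_add_le_of_subgradient {lam c : ℝ} {b s : E}
    (hv : ‖b - c • s‖ ≤ lam) (hvs : ⟪b - c • s, s⟫ = lam * ‖s‖) (β : E) :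
    groupLassoObjective lam c b s + c / 2 * ‖β - s‖ ^ 2 ≤ groupLassoObjective lam c b β := by
  have := groupLassoObjective_sub_sub_eq lam c b s β
  linarith [inner_sub_le_of_subgradient_norm hv hvs β]

theorem blockSoftThreshold_eq_zero_of_norm_le {lam : ℝ} (c : ℝ) {b : E} (h : ‖b‖ ≤ lam) :
    blockSoftThreshold lam c b = 0 := by
  rcases eq_or_ne b 0 with rfl | hb
  · simp [blockSoftThreshold]
  have : 1 ≤ lam / ‖b‖ := (one_le_div (norm_pos_iff.mpr hb)).mpr h
  simp [blockSoftThreshold, max_eq_right (sub_nonpos.mpr this)]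

theorem sub_smul_blockSoftThreshold_of_lt_norm {lam c : ℝ} (hc : c ≠ 0) {b : E}
    (h : lam < ‖b‖) :
    b - c • blockSoftThreshold lam c b = (lam / ‖b‖) • b := by
  have hdiv : lam / ‖b‖ < 1 := by
    rcases eq_or_ne b 0 with rfl | hb
    · simp
    · exact (div_lt_one (norm_pos_iff.mpr hb)).mpr h
  rw [blockSoftThreshold, max_eq_left (by linarith), smul_smul,
    show c * (1 / c * (1 - lam / ‖b‖)) = 1 - lam / ‖b‖ by field_simp, sub_smul, one_smul,
    sub_sub_cancel]

theorem blockSoftThreshold_isSubgradient {lam c : ℝ} (hlam : 0 ≤ lam) (hc : 0 < c) (b : E) :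
    ‖b - c • blockSoftThreshold lam c b‖ ≤ lam ∧
      ⟪b - c • blockSoftThreshold lam c b, blockSoftThreshold lam c b⟫
        = lam * ‖blockSoftThreshold lam c b‖ := by
  rcases le_or_gt ‖b‖ lam with h | h
  · simp [blockSoftThreshold_eq_zero_of_norm_le c h, h]
  have hb : 0 < ‖b‖ := hlam.trans_lt h
  have ht : 0 ≤ 1 / c * (1 - lam / ‖b‖) :=
    mul_nonneg (one_div_pos.mpr hc).le (sub_nonneg.mpr ((div_le_one hb).mpr h.le))
  rw [sub_smul_blockSoftThreshold_of_lt_norm hc.ne' h, blockSoftThreshold,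
    max_eq_left (sub_nonneg.mpr ((div_le_one hb).mpr h.le))]
  simp only [norm_smul, real_inner_smul_left, real_inner_smul_right, real_inner_self_eq_norm_sq,
    Real.norm_eq_abs, abs_of_nonneg (div_nonneg hlam hb.le), abs_of_nonneg ht]
  constructor
  · rw [div_mul_cancel₀ _ hb.ne']
  · field_simp

theorem blockSoftThreshold_eq_zero_iff {lam c : ℝ} (hlam : 0 ≤ lam) (hc : c ≠ 0) {b : E} :
    blockSoftThreshold lam c b = 0 ↔ ‖b‖ ≤ lam := by
  refine ⟨fun h0 => not_lt.mp fun h => h.ne ?_, blockSoftThreshold_eq_zero_of_norm_le c⟩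
  have hfix := sub_smul_blockSoftThreshold_of_lt_norm hc h
  rw [h0, smul_zero, sub_zero] at hfix
  have hb : 0 < ‖b‖ := hlam.trans_lt h
  have := congrArg norm hfix
  rw [norm_smul, Real.norm_eq_abs, abs_of_nonneg (div_nonneg hlam hb.le),
    div_mul_cancel₀ _ hb.ne'] at this
  exact this.symm

end InnerProductSpace

theorem sum_sq_sub_mul_eq {m n : Type*} [Fintype m] [Fintype n] (κ : ℝ) (x : m → ℝ)
    (M : Matrix m n ℝ) (b β : EuclideanSpace ℝ n) (hb : ∀ j, b j = κ * ∑ i, x i * M i j) :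
    κ / 2 * ∑ i, ∑ j, (M i j - x i * β j) ^ 2
      = κ / 2 * ∑ i, ∑ j, M i j ^ 2 - ⟪b, β⟫ + κ * (∑ i, x i * x i) / 2 * ‖β‖ ^ 2 := by
  have hinner : ⟪b, β⟫ = κ * ∑ i, ∑ j, x i * M i j * β j := by
    simp only [PiLp.inner_apply, RCLike.inner_apply, conj_trivial, hb, Finset.mul_sum]
    rw [Finset.sum_comm]
    exact Finset.sum_congr rfl fun i _ => Finset.sum_congr rfl fun j _ => by ring
  have hexpand : ∑ i, ∑ j, (M i j - x i * β j) ^ 2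
      = ∑ i, ∑ j, M i j ^ 2 - 2 * ∑ i, ∑ j, x i * M i j * β j
        + (∑ i, x i * x i) * ∑ j, β j ^ 2 := by
    rw [Finset.sum_mul_sum, Finset.mul_sum, ← Finset.sum_sub_distrib, ← Finset.sum_add_distrib]
    refine Finset.sum_congr rfl fun i _ => ?_
    rw [Finset.mul_sum, ← Finset.sum_sub_distrib, ← Finset.sum_add_distrib]
    exact Finset.sum_congr rfl fun j _ => by ring
  rw [hexpand, hinner, EuclideanSpace.real_norm_sq_eq]
  ring

/-- Single-block Group Lasso update (Proposition 2, Bleakley & Vert):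
with `b = κ xᵀ M`, the unique minimizer of
`β ↦ λ‖β‖₂ + (κ/2)‖M − x βᵀ‖_F²` is the soft-thresholded vector
`β* = (1/(κ xᵀx)) (1 − λ/‖b‖₂)₊ b`, and `β* = 0 ↔ ‖b‖₂ ≤ λ`. -/
theorem group_lasso_block_update (T d : ℕ) (lam κ : ℝ) (hlam : 0 < lam)
    (hκ : 0 < κ) (x : Fin T → ℝ) (hx : x ≠ 0)
    (M : Matrix (Fin T) (Fin d) ℝ)
    (b : EuclideanSpace ℝ (Fin d))
    (hb : ∀ j, b j = κ * ∑ i, x i * M i j)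
    (f : EuclideanSpace ℝ (Fin d) → ℝ)
    (hf : ∀ β, f β = lam * ‖β‖ +
        (κ / 2) * ∑ i, ∑ j, (M i j - x i * β j) ^ 2)
    (βstar : EuclideanSpace ℝ (Fin d))
    (hβstar : βstar =
        ((1 / (κ * ∑ i, x i * x i)) * max (1 - lam / ‖b‖) 0) • b) :
    (∀ β, f βstar ≤ f β ∧ (f β = f βstar → β = βstar)) ∧
    (βstar = 0 ↔ ‖b‖ ≤ lam) := by
  set c := κ * ∑ i, x i * x i
  have hc : 0 < c := mul_pos hκ <| lt_of_le_of_ne (Finset.sum_nonneg fun i _ => mul_self_nonneg _)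
    (Ne.symm (mt dotProduct_self_eq_zero.mp hx))
  change βstar = blockSoftThreshold lam c b at hβstar
  have hfg : ∀ β, f β = κ / 2 * ∑ i, ∑ j, M i j ^ 2 + groupLassoObjective lam c b β := by
    intro β
    rw [hf, sum_sq_sub_mul_eq κ x M b β hb, groupLassoObjective]
    ring
  obtain ⟨hv, hvs⟩ := blockSoftThreshold_isSubgradient hlam.le hc b
  have hgrowth (β) : f βstar + c / 2 * ‖β - βstar‖ ^ 2 ≤ f β := by
    rw [hfg, hfg, hβstar]
    linarith [groupLassoObjective_add_le_of_subgradient hv hvs β]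
  have hgap (β) : 0 ≤ c / 2 * ‖β - βstar‖ ^ 2 := by positivity
  refine ⟨fun β => ⟨?_, fun heq => ?_⟩, hβstar ▸ blockSoftThreshold_eq_zero_iff hlam.le hc.ne'⟩
  · linarith [hgrowth β, hgap β]
  · have : c / 2 * ‖β - βstar‖ ^ 2 = 0 := by linarith [hgrowth β, hgap β]
    simpa [hc.ne', sub_eq_zero] using this
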